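/- arXiv:0809.1489 — 2 statements merged into one kernel-verified Lean document; each statement's English description precedes it below -/
import Mathlib

section
/- With notation as in the degree-reduction transformation (x_v = 2x'_v / max_{i∈I_v}|V_i| and all rows of A having between 2 and Δ_I positive entries), if c is a nonnegative vector then c·x ≥ (2/Δ_I) (c·x'). Consequently, if x' is an α-approximate solution of the transformed max-min LP (whose constraints are the pairwise constraints and whose objectives are unchanged), then x is an (αΔ_I/2)-approximate solution of the original max-min LP. -/
/-!
Let `M v = max_{i ∈ I_v} |V_i|`. Since `M v ≤ Δ`, every coordinate satisfies
`x_v ≥ (2/Δ) x'_v`, which gives the objective bound and, through the minimising objective,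
the approximation ratio. For feasibility, row `i` has `M v ≥ |V_i| = d` on its support, so
`a_i·x ≤ (2/d) a_i·x'`; summing the pairwise constraints over the `d(d-1)` ordered pairs of
`V_i` counts every term `a_{iv} x'_v` exactly `2(d-1)` times, whence `a_i·x' ≤ d/2`.
-/

open Finset

theorem Finset.sum_le_card_div_two_of_add_le_one {ι : Type*} [DecidableEq ι] {V : Finset ι}
    (hV : 2 ≤ #V) {f : ι → ℝ} (hf : ∀ u ∈ V, ∀ v ∈ V, u ≠ v → f u + f v ≤ 1) :
    ∑ v ∈ V, f v ≤ #V / 2 := by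
  set S := ∑ v ∈ V, f v
  have hcard : ∀ u ∈ V, ((V.erase u).card : ℝ) = #V - 1 := by
    intro u hu
    rw [card_erase_of_mem hu, Nat.cast_pred (card_pos.mpr ⟨u, hu⟩)]
  have hrow : ∀ u ∈ V, (#V - 2 : ℝ) * f u + S ≤ #V - 1 := by
    intro u hu
    have hsum : ∑ v ∈ V.erase u, (f u + f v) ≤ ∑ v ∈ V.erase u, (1 : ℝ) :=
      sum_le_sum fun v hv => hf u hu v (mem_of_mem_erase hv) (ne_of_mem_erase hv).symm
    rw [sum_add_distrib, sum_erase_eq_sub (f := f) hu, sum_const, sum_const, nsmul_eq_mul,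
      nsmul_eq_mul, hcard u hu] at hsum
    linarith
  have htotal := sum_le_sum hrow
  rw [sum_add_distrib, ← mul_sum, sum_const, sum_const, nsmul_eq_mul, nsmul_eq_mul] at htotal
  have h1 : (1 : ℝ) < #V := by exact_mod_cast hV
  nlinarith

theorem Finset.add_le_sum_of_nonneg {ι : Type*} [DecidableEq ι] {s : Finset ι} {f : ι → ℝ}
    (hf : ∀ i ∈ s, 0 ≤ f i) {u v : ι} (hu : u ∈ s) (hv : v ∈ s) (huv : u ≠ v) :
    f u + f v ≤ ∑ i ∈ s, f i := by
  rw [← sum_pair huv]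
  exact sum_le_sum_of_subset_of_nonneg (insert_subset hu (singleton_subset_iff.mpr hv))
    fun i hi _ => hf i hi

theorem Finset.inf'_le_mul_inf' {K : Type*} {s : Finset K} (hs : s.Nonempty) {f g : K → ℝ}
    (t : ℝ) (h : ∀ k ∈ s, g k ≤ t * f k) : s.inf' hs g ≤ t * s.inf' hs f := by
  obtain ⟨k, hk, hmin⟩ := exists_mem_eq_inf' hs f
  rw [hmin]
  exact (inf'_le g hk).trans (h k hk)

namespace MaxMinLP

variable {ι κ : Type*} [Fintype κ]

/-- `V_i`, the support of row `i`. -/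
noncomputable def rowSupport (A : ι → κ → ℝ) (i : ι) : Finset κ :=
  univ.filter fun v => 0 < A i v

theorem mem_rowSupport {A : ι → κ → ℝ} {i : ι} {v : κ} : v ∈ rowSupport A i ↔ 0 < A i v := by
  simp [rowSupport]

variable [Fintype ι]

/-- `max_{i ∈ I_v} |V_i|`, which is `0` when `I_v` is empty. -/
noncomputable def maxRowSupportCard (A : ι → κ → ℝ) (v : κ) : ℕ :=
  (univ.filter fun i => 0 < A i v).sup fun i => #(rowSupport A i)

noncomputable def scaleBack (A : ι → κ → ℝ) (x' : κ → ℝ) (v : κ) : ℝ :=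
  2 * x' v / maxRowSupportCard A v

variable {A : ι → κ → ℝ}

theorem card_rowSupport_le_maxRowSupportCard {i : ι} {v : κ} (h : 0 < A i v) :
    #(rowSupport A i) ≤ maxRowSupportCard A v :=
  le_sup (f := fun i => #(rowSupport A i)) (by simpa using h)

theorem maxRowSupportCard_pos {i : ι} {v : κ} (h : 0 < A i v) : 0 < maxRowSupportCard A v :=
  (card_pos.mpr ⟨v, mem_rowSupport.mpr h⟩).trans_le (card_rowSupport_le_maxRowSupportCard h)

theorem maxRowSupportCard_le {Δ : ℕ} (hΔ : ∀ i, #(rowSupport A i) ≤ Δ) (v : κ) :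
    maxRowSupportCard A v ≤ Δ :=
  Finset.sup_le fun i _ => hΔ i

variable {x' : κ → ℝ}

theorem scaleBack_nonneg (hx' : ∀ v, 0 ≤ x' v) (v : κ) : 0 ≤ scaleBack A x' v := by
  unfold scaleBack
  have := hx' v
  positivity

theorem two_div_mul_le_scaleBack {Δ : ℕ} {v : κ} (hx' : 0 ≤ x' v)
    (hpos : 0 < maxRowSupportCard A v) (hΔ : maxRowSupportCard A v ≤ Δ) :
    2 / (Δ : ℝ) * x' v ≤ scaleBack A x' v := by
  rw [scaleBack, div_mul_eq_mul_div]
  exact div_le_div_of_nonneg_left (by positivity) (by exact_mod_cast hpos)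
    (by exact_mod_cast hΔ)

theorem le_div_two_mul_scaleBack {Δ : ℕ} {v : κ} (hx' : 0 ≤ x' v)
    (hpos : 0 < maxRowSupportCard A v) (hΔ : maxRowSupportCard A v ≤ Δ) :
    x' v ≤ Δ / 2 * scaleBack A x' v := by
  have hΔpos : (0 : ℝ) < Δ := by exact_mod_cast hpos.trans_le hΔ
  calc x' v = Δ / 2 * (2 / Δ * x' v) := by field_simp
    _ ≤ Δ / 2 * scaleBack A x' v := by gcongr; exact two_div_mul_le_scaleBack hx' hpos hΔ

theorem scaleBack_le_of_pos {i : ι} {v : κ} (hx' : 0 ≤ x' v) (h : 0 < A i v) :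
    scaleBack A x' v ≤ 2 * x' v / #(rowSupport A i) :=
  div_le_div_of_nonneg_left (by positivity)
    (by exact_mod_cast card_pos.mpr ⟨v, mem_rowSupport.mpr h⟩)
    (by exact_mod_cast card_rowSupport_le_maxRowSupportCard h)

theorem sum_mul_scaleBack_le_one [DecidableEq κ] {i : ι} (hA : ∀ v, 0 ≤ A i v)
    (hx' : ∀ v, 0 ≤ x' v) (hcard : 2 ≤ #(rowSupport A i))
    (hpair : ∀ u v, u ≠ v → 0 < A i u → 0 < A i v → A i u * x' u + A i v * x' v ≤ 1) :
    ∑ v, A i v * scaleBack A x' v ≤ 1 := by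
  set V := rowSupport A i
  have hd : (0 : ℝ) < #V := by exact_mod_cast zero_lt_two.trans_le hcard
  have hpairSum : ∑ v ∈ V, A i v * x' v ≤ #V / 2 :=
    sum_le_card_div_two_of_add_le_one hcard fun u hu v hv huv =>
      hpair u v huv (mem_rowSupport.mp hu) (mem_rowSupport.mp hv)
  have hoff : ∀ v ∉ V, A i v * scaleBack A x' v = 0 := fun v hv => by
    rw [(hA v).eq_of_not_lt' (mt mem_rowSupport.mpr hv), zero_mul]
  calc ∑ v, A i v * scaleBack A x' v = ∑ v ∈ V, A i v * scaleBack A x' v :=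
        (sum_subset (subset_univ V) fun v _ hv => hoff v hv).symm
    _ ≤ ∑ v ∈ V, A i v * (2 * x' v / #V) :=
        sum_le_sum fun v hv => mul_le_mul_of_nonneg_left
          (scaleBack_le_of_pos (hx' v) (mem_rowSupport.mp hv)) (hA v)
    _ = 2 / #V * ∑ v ∈ V, A i v * x' v := by
        rw [mul_sum]; exact sum_congr rfl fun v _ => by ring
    _ ≤ 2 / #V * (#V / 2) := by gcongr
    _ = 1 := by field_simp

end MaxMinLP

open MaxMinLP

/-- Degree-reduction transformation for max-min LPs: the scaled-back solution
`x_v = 2 x'_v / max_{i ∈ I_v} |V_i|` satisfies `c·x ≥ (2/Δ_I) (c·x')` for any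
nonnegative `c`; consequently, if `x'` is an `α`-approximate solution of the
transformed instance (pairwise constraints, unchanged objectives), then `x` is
a feasible `(α Δ_I / 2)`-approximate solution of the original instance. -/
theorem stmt_1 {K : Type*} [Fintype K] [Nonempty K] (m n Δ : ℕ) (α : ℝ)
    (A : Fin m → Fin n → ℝ) (C : K → Fin n → ℝ) (x' x : Fin n → ℝ)
    (hA : ∀ i v, 0 ≤ A i v) (hC : ∀ k v, 0 ≤ C k v)
    (hα : 0 < α)
    (hsupp : ∀ i, 2 ≤ (univ.filter (fun v => 0 < A i v)).card ∧
      (univ.filter (fun v => 0 < A i v)).card ≤ Δ)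
    (hcover : ∀ v, ∃ i, 0 < A i v)
    (hx'0 : ∀ v, 0 ≤ x' v)
    (hx'feas : ∀ i (u v : Fin n), u ≠ v → 0 < A i u → 0 < A i v →
      A i u * x' u + A i v * x' v ≤ 1)
    (hx : ∀ v, x v = 2 * x' v /
      (((univ.filter (fun i => 0 < A i v)).sup
        (fun i => (univ.filter (fun u => 0 < A i u)).card) : ℕ) : ℝ))
    (happrox : ∀ z : Fin n → ℝ, (∀ v, 0 ≤ z v) →
      (∀ i (u v : Fin n), u ≠ v → 0 < A i u → 0 < A i v →
        A i u * z u + A i v * z v ≤ 1) →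
      univ.inf' univ_nonempty (fun k => ∑ v, C k v * z v) ≤
        α * univ.inf' univ_nonempty (fun k => ∑ v, C k v * x' v)) :
    (∀ c : Fin n → ℝ, (∀ v, 0 ≤ c v) →
      (2 / (Δ : ℝ)) * ∑ v, c v * x' v ≤ ∑ v, c v * x v) ∧
    ((∀ v, 0 ≤ x v) ∧ (∀ i, ∑ v, A i v * x v ≤ 1)) ∧
    (∀ z : Fin n → ℝ, (∀ v, 0 ≤ z v) → (∀ i, ∑ v, A i v * z v ≤ 1) →
      univ.inf' univ_nonempty (fun k => ∑ v, C k v * z v) ≤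
        (α * Δ / 2) * univ.inf' univ_nonempty (fun k => ∑ v, C k v * x v)) := by
  obtain rfl : x = scaleBack A x' := funext hx
  have hpos v : 0 < maxRowSupportCard A v :=
    maxRowSupportCard_pos (hcover v).choose_spec
  have hle := maxRowSupportCard_le fun i => (hsupp i).2
  refine ⟨fun c hc => ?_, ⟨scaleBack_nonneg hx'0, fun i =>
    sum_mul_scaleBack_le_one (hA i) hx'0 (hsupp i).1 (hx'feas i)⟩, fun z hz hzfeas => ?_⟩
  · rw [mul_sum]
    exact sum_le_sum fun v _ => by
      rw [mul_left_comm]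
      exact mul_le_mul_of_nonneg_left (two_div_mul_le_scaleBack (hx'0 v) (hpos v) (hle v)) (hc v)
  · have hzpair i u v (huv : u ≠ v) (_ : 0 < A i u) (_ : 0 < A i v) :
        A i u * z u + A i v * z v ≤ 1 :=
      (add_le_sum_of_nonneg (fun w _ => mul_nonneg (hA i w) (hz w)) (mem_univ u) (mem_univ v)
        huv).trans (hzfeas i)
    have hobj : univ.inf' univ_nonempty (fun k => ∑ v, C k v * x' v) ≤
        Δ / 2 * univ.inf' univ_nonempty (fun k => ∑ v, C k v * scaleBack A x' v) :=
      inf'_le_mul_inf' _ _ fun k _ => by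
        rw [mul_sum]
        exact sum_le_sum fun v _ => by
          rw [mul_left_comm]
          exact mul_le_mul_of_nonneg_left
            (le_div_two_mul_scaleBack (hx'0 v) (hpos v) (hle v)) (hC k v)
    calc _ ≤ α * univ.inf' univ_nonempty (fun k => ∑ v, C k v * x' v) := happrox z hz hzpair
      _ ≤ α * (Δ / 2 * univ.inf' univ_nonempty (fun k => ∑ v, C k v * scaleBack A x' v)) :=
        mul_le_mul_of_nonneg_left hobj hα.le
      _ = _ := by ring
end

section
/- Consider a max-min LP and an objective k with a single adjacent agent v. Replace v by two copies t and u with c_{kt} = c_{ku} = c_{kv}/2, duplicating each constraint adjacent to v so that one copy contains t and the other contains u (other coefficients unchanged). Then the optimum of the transformed instance equals the optimum of the original instance. -/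
/-!
A feasible solution of the original instance gives one of the split instance with the same
objective values by copying `x v₀` to both copies. Conversely, given a split solution, give `v₀`
the larger of the two copies' values: every constraint adjacent to `v₀` was present in both
copies, so the copy carrying the maximum certifies feasibility, and since `v₀` only enters
objective `k₀`, the two halved coefficients are dominated by the full one at the maximum. Thus
each value set dominates the other and the suprema agree.
-/

open Finset

namespace MaxMinLP

theorem half_mul_add_half_mul_le_mul_max {c : ℝ} (hc : 0 ≤ c) (a b : ℝ) :
    c / 2 * a + c / 2 * b ≤ c * max a b := by
  have := mul_le_mul_of_nonneg_left (add_le_add (le_max_left a b) (le_max_right a b)) hc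
  linarith

theorem splitCoeff_eq {V K : Type*} [DecidableEq K] {C : K → V → ℝ} {k₀ : K} {v₀ : V}
    (honly : ∀ k, k ≠ k₀ → C k v₀ = 0) (k : K) :
    (if k = k₀ then C k₀ v₀ / 2 else 0) = C k v₀ / 2 := by
  split_ifs with hk
  · rw [hk]
  · rw [honly k hk, zero_div]

variable {V I K : Type*} [Fintype V] [Fintype K] [Nonempty K]

def values (A : I → V → ℝ) (C : K → V → ℝ) : Set ℝ :=
  {w | ∃ x : V → ℝ, (∀ v, 0 ≤ x v) ∧ (∀ i, ∑ v, A i v * x v ≤ 1) ∧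
    w = univ.inf' univ_nonempty (fun k => ∑ v, C k v * x v)}

variable [DecidableEq V] [DecidableEq K]

/-- The objective values of the instance in which `v₀` is replaced by the copies `Sum.inr b`
(`b : Bool`) and each constraint `i` by the copies `(i, b)`. -/
def splitValues (A : I → V → ℝ) (C : K → V → ℝ) (k₀ : K) (v₀ : V) : Set ℝ :=
  {w | ∃ x : ({u : V // u ≠ v₀} ⊕ Bool) → ℝ, (∀ v, 0 ≤ x v) ∧
    (∀ p : I × Bool,
      (∑ u : {u : V // u ≠ v₀}, A p.1 u.1 * x (Sum.inl u)) + A p.1 v₀ * x (Sum.inr p.2) ≤ 1) ∧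
    w = univ.inf' univ_nonempty (fun k =>
      (∑ u : {u : V // u ≠ v₀}, C k u.1 * x (Sum.inl u)) +
      (∑ b : Bool, (if k = k₀ then C k₀ v₀ / 2 else 0) * x (Sum.inr b)))}

section Split

variable (v₀ : V)

def liftSplit (x : V → ℝ) : {u : V // u ≠ v₀} ⊕ Bool → ℝ :=
  Sum.elim (fun u => x u) (fun _ => x v₀)

def mergeSplit (x : {u : V // u ≠ v₀} ⊕ Bool → ℝ) : V → ℝ :=
  fun v => if h : v = v₀ then max (x (.inr true)) (x (.inr false)) else x (.inl ⟨v, h⟩)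

theorem sum_mul_eq_sum_subtype_ne_add (f x : V → ℝ) :
    ∑ v, f v * x v = (∑ u : {u : V // u ≠ v₀}, f u * x u) + f v₀ * x v₀ := by
  rw [Fintype.sum_eq_add_sum_subtype_ne _ v₀, add_comm]

theorem sum_mul_liftSplit (f x : V → ℝ) (b : Bool) :
    (∑ u : {u : V // u ≠ v₀}, f u * liftSplit v₀ x (.inl u)) + f v₀ * liftSplit v₀ x (.inr b) =
      ∑ v, f v * x v :=
  (sum_mul_eq_sum_subtype_ne_add v₀ f x).symm

theorem sum_mul_mergeSplit (f : V → ℝ) (x : {u : V // u ≠ v₀} ⊕ Bool → ℝ) :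
    ∑ v, f v * mergeSplit v₀ x v =
      (∑ u : {u : V // u ≠ v₀}, f u * x (.inl u)) + f v₀ * max (x (.inr true)) (x (.inr false)) := by
  rw [sum_mul_eq_sum_subtype_ne_add v₀]
  simp only [mergeSplit, dif_pos, Subtype.coe_eta, ne_eq]
  congr 1
  exact sum_congr rfl fun u _ => by rw [dif_neg u.2]

end Split

variable {A : I → V → ℝ} {C : K → V → ℝ} {k₀ : K} {v₀ : V}

theorem values_subset_splitValues (honly : ∀ k, k ≠ k₀ → C k v₀ = 0) :
    values A C ⊆ splitValues A C k₀ v₀ := by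
  rintro w ⟨x, hx0, hxA, rfl⟩
  refine ⟨liftSplit v₀ x, ?_, fun p => (sum_mul_liftSplit v₀ _ x p.2).le.trans (hxA p.1), ?_⟩
  · rintro (u | b)
    exacts [hx0 u, hx0 v₀]
  · refine inf'_congr _ rfl fun k _ => ?_
    rw [splitCoeff_eq honly, ← sum_mul_liftSplit v₀ _ x true]
    simp only [liftSplit, Sum.elim_inr, Fintype.sum_bool]
    ring

theorem exists_mem_values_ge_of_mem_splitValues (hC : ∀ k v, 0 ≤ C k v)
    (honly : ∀ k, k ≠ k₀ → C k v₀ = 0) {w : ℝ} (hw : w ∈ splitValues A C k₀ v₀) :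
    ∃ w' ∈ values A C, w ≤ w' := by
  obtain ⟨x, hx0, hxA, rfl⟩ := hw
  obtain ⟨b, hb⟩ : ∃ b, max (x (.inr true)) (x (.inr false)) = x (.inr b) :=
    (max_choice _ _).elim (fun h => ⟨true, h⟩) (fun h => ⟨false, h⟩)
  refine ⟨_, ⟨mergeSplit v₀ x, fun v => ?_, fun i => ?_, rfl⟩, inf'_mono_fun fun k _ => ?_⟩
  · unfold mergeSplit
    split_ifs
    exacts [le_max_of_le_left (hx0 _), hx0 _]
  · rw [sum_mul_mergeSplit, hb]
    exact hxA (i, b)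
  · rw [sum_mul_mergeSplit, splitCoeff_eq honly, Fintype.sum_bool]
    exact add_le_add_right (half_mul_add_half_mul_le_mul_max (hC k v₀) _ _) _

end MaxMinLP

theorem stmt_3_general {V I K : Type*} [Fintype V] [Fintype I] [Fintype K]
    [DecidableEq V] [DecidableEq K] [Nonempty K]
    (A : I → V → ℝ) (C : K → V → ℝ)
    (hC : ∀ k v, 0 ≤ C k v)
    (k₀ : K) (v₀ : V)
    (honly : ∀ k, k ≠ k₀ → C k v₀ = 0) :
    sSup {w : ℝ | ∃ x : V → ℝ, (∀ v, 0 ≤ x v) ∧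
        (∀ i, ∑ v, A i v * x v ≤ 1) ∧
        w = univ.inf' univ_nonempty (fun k => ∑ v, C k v * x v)} =
    sSup {w : ℝ | ∃ x : ({u : V // u ≠ v₀} ⊕ Bool) → ℝ,
        (∀ v, 0 ≤ x v) ∧
        (∀ p : I × Bool,
          (∑ u : {u : V // u ≠ v₀}, A p.1 u.1 * x (Sum.inl u)) +
            A p.1 v₀ * x (Sum.inr p.2) ≤ 1) ∧
        w = univ.inf' univ_nonempty (fun k =>
          (∑ u : {u : V // u ≠ v₀}, C k u.1 * x (Sum.inl u)) +
          (∑ b : Bool, (if k = k₀ then C k₀ v₀ / 2 else 0) * x (Sum.inr b)))} :=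
  csSup_eq_csSup_of_forall_exists_le
    (fun w hw => ⟨w, MaxMinLP.values_subset_splitValues (A := A) (C := C) honly hw, le_rfl⟩)
    (fun _ hw => MaxMinLP.exists_mem_values_ge_of_mem_splitValues hC honly hw)

/-- Splitting the unique agent `v₀` of a singleton objective `k₀` into two
copies with halved objective coefficient (each constraint adjacent to `v₀`
being duplicated so that each copy contains one copy of `v₀`, other
coefficients unchanged) preserves the optimum of the max-min LP. -/
theorem stmt_3 {V I K : Type*} [Fintype V] [Fintype I] [Fintype K]
    [DecidableEq V] [DecidableEq K] [Nonempty K]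
    (A : I → V → ℝ) (C : K → V → ℝ)
    (hA : ∀ i v, 0 ≤ A i v) (hC : ∀ k v, 0 ≤ C k v)
    (k₀ : K) (v₀ : V)
    (hadj : 0 < C k₀ v₀)
    (hsingle : ∀ v, 0 < C k₀ v → v = v₀)
    (honly : ∀ k, k ≠ k₀ → C k v₀ = 0) :
    sSup {w : ℝ | ∃ x : V → ℝ, (∀ v, 0 ≤ x v) ∧
        (∀ i, ∑ v, A i v * x v ≤ 1) ∧
        w = univ.inf' univ_nonempty (fun k => ∑ v, C k v * x v)} =
    sSup {w : ℝ | ∃ x : ({u : V // u ≠ v₀} ⊕ Bool) → ℝ,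
        (∀ v, 0 ≤ x v) ∧
        (∀ p : I × Bool,
          (∑ u : {u : V // u ≠ v₀}, A p.1 u.1 * x (Sum.inl u)) +
            A p.1 v₀ * x (Sum.inr p.2) ≤ 1) ∧
        w = univ.inf' univ_nonempty (fun k =>
          (∑ u : {u : V // u ≠ v₀}, C k u.1 * x (Sum.inl u)) +
          (∑ b : Bool, (if k = k₀ then C k₀ v₀ / 2 else 0) * x (Sum.inr b)))} :=
  stmt_3_general A C hC k₀ v₀ honly
end
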